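/- For any δ > 0, there exists a δ-net of H_{d,r}^s with respect to the Frobenius norm, contained in H_{d,r}^s, with at most (12/δ + 1)^{r(2d+1)} elements; that is, there exist B₁, …, B_N ∈ H_{d,r}^s with N ≤ (12/δ + 1)^{r(2d+1)} such that for every B ∈ H_{d,r}^s there is some i with ‖B − B_i‖_F ≤ δ. -/

import Mathlib

noncomputable section

/-- Frobenius norm of a complex matrix. -/
def frobNorm {d : ℕ} (M : Matrix (Fin d) (Fin d) ℂ) : ℝ :=
  Real.sqrt (∑ i, ∑ j, Complex.normSq (M i j))

/-- `H_{d,r}^s`: Hermitian `d×d` matrices of rank at most `r` with unit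
Frobenius norm. -/
def Hs (d r : ℕ) : Set (Matrix (Fin d) (Fin d) ℂ) :=
  {X | X.IsHermitian ∧ X.rank ≤ r ∧ frobNorm X = 1}

open MeasureTheory Metric Module ENNReal Complex Matrix

lemma packing_bound {E : Type*} [NormedAddCommGroup E] [NormedSpace ℝ E] [FiniteDimensional ℝ E]
    {ε : ℝ} (hε : 0 < ε) (T : Finset E) (hT : ↑T ⊆ closedBall (0:E) 1)
    (hsep : ∀ x ∈ T, ∀ y ∈ T, x ≠ y → ε ≤ dist x y) :
    (T.card : ℝ) ≤ (2/ε + 1) ^ (finrank ℝ E) := by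
  letI : MeasurableSpace E := borel E
  haveI : BorelSpace E := ⟨rfl⟩
  set n := finrank ℝ E with hn
  let μ : Measure E := (finBasis ℝ E).addHaar
  have hε2 : 0 < ε/2 := by positivity
  have hdisj : (↑T : Set E).PairwiseDisjoint (fun x => ball x (ε/2)) := by
    intro x hx y hy hxy
    refine Set.disjoint_left.2 fun z hzx hzy => ?_
    have hd : dist x y < ε := by
      calc dist x y ≤ dist x z + dist z y := dist_triangle _ _ _
        _ < ε/2 + ε/2 := by
            have h1 : dist z x < ε/2 := hzx
            have h2 : dist z y < ε/2 := hzy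
            rw [dist_comm x z]; linarith
        _ = ε := by ring
    linarith [hsep x hx y hy hxy]
  have hsub : (⋃ x ∈ T, ball x (ε/2)) ⊆ ball (0:E) (1 + ε/2) := by
    intro z hz
    simp only [Set.mem_iUnion] at hz
    obtain ⟨x, hx, hzx⟩ := hz
    have hx1 : dist x 0 ≤ 1 := by simpa [dist_eq_norm] using hT hx
    have ht : dist z 0 ≤ dist z x + dist x 0 := dist_triangle _ _ _
    have hzx' : dist z x < ε/2 := hzx
    simp only [mem_ball]
    linarith
  have hmeas : μ (⋃ x ∈ T, ball x (ε/2)) = T.card * (ENNReal.ofReal ((ε/2)^n) * μ (ball 0 1)) := by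
    rw [measure_biUnion_finset hdisj (fun x _ => measurableSet_ball)]
    rw [Finset.sum_congr rfl (fun x _ => μ.addHaar_ball_of_pos x hε2)]
    simp [Finset.sum_const, nsmul_eq_mul]
    rfl
  have hbig : μ (ball (0:E) (1 + ε/2)) = ENNReal.ofReal ((1+ε/2)^n) * μ (ball 0 1) :=
    μ.addHaar_ball_of_pos 0 (by linarith)
  have hle : (T.card : ℝ≥0∞) * ENNReal.ofReal ((ε/2)^n) * μ (ball 0 1)
      ≤ ENNReal.ofReal ((1+ε/2)^n) * μ (ball 0 1) := by
    rw [mul_assoc, ← hmeas, ← hbig]; exact measure_mono hsub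
  have hpos : 0 < μ (ball (0:E) 1) := measure_ball_pos μ 0 one_pos
  have hfin : μ (ball (0:E) 1) ≠ ⊤ := measure_ball_lt_top.ne
  have hle2 : (T.card : ℝ≥0∞) * ENNReal.ofReal ((ε/2)^n) ≤ ENNReal.ofReal ((1+ε/2)^n) :=
    (ENNReal.mul_le_mul_iff_left hpos.ne' hfin).1 hle
  -- to reals
  have h3 : (T.card : ℝ) * (ε/2)^n ≤ (1+ε/2)^n := by
    have := (ENNReal.ofReal_le_ofReal_iff (by positivity)).2 (le_refl ((1+ε/2)^n))
    rw [← ENNReal.ofReal_natCast T.card, ← ENNReal.ofReal_mul (by positivity)] at hle2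
    exact (ENNReal.ofReal_le_ofReal_iff (by positivity)).1 hle2
  have hεn : 0 < (ε/2)^n := by positivity
  rw [← le_div_iff₀ hεn] at h3
  calc (T.card : ℝ) ≤ (1+ε/2)^n / (ε/2)^n := h3
    _ = (2/ε + 1)^n := by rw [← div_pow]; congr 1; field_simp

lemma exists_net {E : Type*} [NormedAddCommGroup E] [NormedSpace ℝ E] [FiniteDimensional ℝ E]
    (K : Set E) (hK : K ⊆ closedBall (0:E) 1) {ε : ℝ} (hε : 0 < ε) :
    ∃ T : Finset E, ↑T ⊆ K ∧ (T.card : ℝ) ≤ (2/ε + 1) ^ (finrank ℝ E) ∧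
      ∀ x ∈ K, ∃ t ∈ T, dist x t ≤ ε := by
  classical
  set P : Finset E → Prop := fun T =>
    ↑T ⊆ K ∧ ∀ x ∈ T, ∀ y ∈ T, x ≠ y → ε ≤ dist x y with hP
  have hcard : ∀ T : Finset E, P T → (T.card : ℝ) ≤ (2/ε + 1) ^ (finrank ℝ E) :=
    fun T hT => packing_bound hε T (hT.1.trans hK) hT.2
  set S : Set ℕ := {m | ∃ T : Finset E, P T ∧ T.card = m} with hS
  have hS0 : 0 ∈ S := ⟨∅, ⟨by simp, by simp⟩, rfl⟩
  have hSbdd : BddAbove S := by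
    refine ⟨⌈(2/ε + 1) ^ (finrank ℝ E)⌉₊, fun m hm => ?_⟩
    obtain ⟨T, hT, rfl⟩ := hm
    exact_mod_cast (hcard T hT).trans (Nat.le_ceil _)
  obtain ⟨T, hT, hTcard⟩ : ∃ T : Finset E, P T ∧ T.card = sSup S := Nat.sSup_mem ⟨0, hS0⟩ hSbdd
  refine ⟨T, hT.1, hcard T hT, fun x hx => ?_⟩
  by_contra h
  push_neg at h
  have hxT : x ∉ T := fun hxT => by have := h x hxT; simp at this; linarith
  have hins : P (insert x T) := by
    constructor
    · intro z hz
      rcases Finset.mem_insert.1 (by exact_mod_cast hz) with rfl | hz'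
      · exact hx
      · exact hT.1 hz'
    · intro a ha b hb hab
      rcases Finset.mem_insert.1 ha with rfl | ha' <;>
        rcases Finset.mem_insert.1 hb with rfl | hb'
      · exact absurd rfl hab
      · exact (h b hb').le
      · rw [dist_comm]; exact (h a ha').le
      · exact hT.2 a ha' b hb' hab
  have : (insert x T).card ∈ S := ⟨_, hins, rfl⟩
  have hle := le_csSup hSbdd this
  rw [Finset.card_insert_of_notMem hxT, hTcard] at hle
  omega

def dotc {d : ℕ} (x y : Fin d → ℂ) : ℂ := ∑ i, (starRingEnd ℂ) (x i) * y i

def OuterSum {d r : ℕ} (c : Fin r → ℝ) (p q : Fin r → Fin d → ℂ) :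
    Matrix (Fin d) (Fin d) ℂ :=
  Matrix.of fun i j => ∑ k, (c k : ℂ) * p k i * (starRingEnd ℂ) (q k j)

def frobSq {d : ℕ} (M : Matrix (Fin d) (Fin d) ℂ) : ℝ :=
  ∑ i, ∑ j, Complex.normSq (M i j)

private lemma sum_swap4 {α β : Type*} [Fintype α] [Fintype β] (f : α → α → β → β → ℂ) :
    ∑ i, ∑ j, ∑ k, ∑ l, f i j k l = ∑ k, ∑ l, ∑ i, ∑ j, f i j k l := by
  calc ∑ i, ∑ j, ∑ k, ∑ l, f i j k l
      = ∑ i, ∑ k, ∑ j, ∑ l, f i j k l :=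
        Finset.sum_congr rfl fun i _ => Finset.sum_comm
    _ = ∑ k, ∑ i, ∑ j, ∑ l, f i j k l := Finset.sum_comm
    _ = ∑ k, ∑ i, ∑ l, ∑ j, f i j k l :=
        Finset.sum_congr rfl fun k _ => Finset.sum_congr rfl fun i _ => Finset.sum_comm
    _ = ∑ k, ∑ l, ∑ i, ∑ j, f i j k l :=
        Finset.sum_congr rfl fun k _ => Finset.sum_comm

lemma frobSq_outerSum {d r : ℕ} (c : Fin r → ℝ) (p q : Fin r → Fin d → ℂ) :
    (frobSq (OuterSum c p q) : ℂ)
      = ∑ k, ∑ l, (c k : ℂ) * (c l : ℂ) * dotc (p l) (p k) * dotc (q k) (q l) := by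
  have h : (frobSq (OuterSum c p q) : ℂ)
      = ∑ i, ∑ j, OuterSum c p q i j * (starRingEnd ℂ) (OuterSum c p q i j) := by
    simp only [frobSq, Complex.ofReal_sum]
    exact Finset.sum_congr rfl fun i _ => Finset.sum_congr rfl fun j _ =>
      (Complex.mul_conj _).symm
  rw [h]
  have h2 : ∀ i j, OuterSum c p q i j * (starRingEnd ℂ) (OuterSum c p q i j)
      = ∑ k, ∑ l, ((c k : ℂ) * p k i * (starRingEnd ℂ) (q k j))
          * ((c l : ℂ) * (starRingEnd ℂ) (p l i) * q l j) := by
    intro i j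
    rw [show OuterSum c p q i j = ∑ k, (c k : ℂ) * p k i * (starRingEnd ℂ) (q k j) from rfl,
      map_sum, Finset.sum_mul_sum]
    refine Finset.sum_congr rfl fun k _ => Finset.sum_congr rfl fun l _ => ?_
    simp only [_root_.map_mul, Complex.conj_conj, Complex.conj_ofReal]
  simp only [h2]
  rw [sum_swap4]
  refine Finset.sum_congr rfl fun k _ => Finset.sum_congr rfl fun l _ => ?_
  simp only [dotc, Finset.mul_sum, Finset.sum_mul]
  rw [Finset.sum_comm]
  refine Finset.sum_congr rfl fun i _ => Finset.sum_congr rfl fun j _ => ?_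
  ring

def nsqv {d : ℕ} (x : Fin d → ℂ) : ℝ := ∑ i, Complex.normSq (x i)

def Gram {d r : ℕ} (c : Fin r → ℝ) (u : Fin r → Fin d → ℂ) : Prop :=
  ∀ j k, dotc (u j) (u k) = if j = k ∧ c j ≠ 0 then 1 else 0

lemma dotc_self (x : Fin d → ℂ) : dotc x x = (nsqv x : ℂ) := by
  simp only [dotc, nsqv, Complex.ofReal_sum]
  exact Finset.sum_congr rfl fun i _ => by
    rw [mul_comm]; exact Complex.mul_conj _

/-- Key estimate: if the `q` family is `Gram`-orthonormal w.r.t. some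
coefficients `c₀`, then the Frobenius square of `OuterSum c p q` is computable. -/
lemma frobSq_outerSum_eq {d r : ℕ} (c₀ c : Fin r → ℝ) (p q : Fin r → Fin d → ℂ)
    (hG : Gram c₀ q) :
    frobSq (OuterSum c p q)
      = ∑ k, (if c₀ k ≠ 0 then 1 else 0) * (c k)^2 * nsqv (p k) := by
  have h := frobSq_outerSum c p q
  have h2 : ∀ k l : Fin r, (c k : ℂ) * (c l : ℂ) * dotc (p l) (p k) * dotc (q k) (q l)
      = if k = l then (if c₀ k ≠ 0 then 1 else 0) * ((c k : ℂ))^2 * dotc (p k) (p k) else 0 := by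
    intro k l
    rw [hG k l]
    by_cases hkl : k = l
    · subst hkl
      simp only [eq_self_iff_true, true_and, if_true]
      by_cases hc : c₀ k ≠ 0
      · rw [if_pos hc]; ring
      · rw [if_neg hc]; ring
    · simp [hkl]
  rw [Finset.sum_congr rfl (fun k _ => Finset.sum_congr rfl (fun l _ => h2 k l))] at h
  simp only [Finset.sum_ite_eq, Finset.mem_univ, if_true] at h
  have : (frobSq (OuterSum c p q) : ℂ)
      = ((∑ k, (if c₀ k ≠ 0 then 1 else 0) * (c k)^2 * nsqv (p k) : ℝ) : ℂ) := by
    rw [h]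
    push_cast
    refine Finset.sum_congr rfl fun k _ => ?_
    rw [dotc_self]
    by_cases hc : c₀ k ≠ 0 <;> simp [hc]
  exact_mod_cast this

lemma outerSum_conjTranspose {d r : ℕ} (c : Fin r → ℝ) (p q : Fin r → Fin d → ℂ) :
    (OuterSum c p q)ᴴ = OuterSum c q p := by
  ext i j
  show star (∑ k, (c k : ℂ) * p k j * (starRingEnd ℂ) (q k i)) = _
  rw [star_sum]
  refine Finset.sum_congr rfl fun k _ => ?_
  simp only [Complex.star_def, _root_.map_mul, Complex.conj_conj, Complex.conj_ofReal]
  ring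

lemma frobSq_conjTranspose {d : ℕ} (M : Matrix (Fin d) (Fin d) ℂ) :
    frobSq Mᴴ = frobSq M := by
  rw [frobSq, frobSq, Finset.sum_comm]
  exact Finset.sum_congr rfl fun i _ => Finset.sum_congr rfl fun j _ => by
    simp [Matrix.conjTranspose_apply]

lemma frobNorm_eq_sqrt {d : ℕ} (M : Matrix (Fin d) (Fin d) ℂ) :
    frobNorm M = Real.sqrt (frobSq M) := rfl

lemma frobSq_nonneg {d : ℕ} (M : Matrix (Fin d) (Fin d) ℂ) : 0 ≤ frobSq M :=
  Finset.sum_nonneg fun i _ => Finset.sum_nonneg fun j _ => Complex.normSq_nonneg _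

lemma frobNorm_le_of_sq {d : ℕ} {M : Matrix (Fin d) (Fin d) ℂ} {s : ℝ}
    (hs : 0 ≤ s) (h : frobSq M ≤ s^2) : frobNorm M ≤ s := by
  rw [frobNorm_eq_sqrt]
  calc Real.sqrt (frobSq M) ≤ Real.sqrt (s^2) := Real.sqrt_le_sqrt h
    _ = s := Real.sqrt_sq hs

lemma frobNorm_eq_norm {d : ℕ} (M : Matrix (Fin d) (Fin d) ℂ) :
    frobNorm M
      = ‖(WithLp.equiv 2 ((Fin d × Fin d) → ℂ)).symm (fun ij => M ij.1 ij.2)‖ := by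
  rw [EuclideanSpace.norm_eq, frobNorm]
  congr 1
  rw [Fintype.sum_prod_type]
  refine Finset.sum_congr rfl fun i _ => Finset.sum_congr rfl fun j _ => ?_
  simp [Complex.sq_norm]

lemma frobNorm_add_le {d : ℕ} (X Y : Matrix (Fin d) (Fin d) ℂ) :
    frobNorm (X + Y) ≤ frobNorm X + frobNorm Y := by
  rw [frobNorm_eq_norm, frobNorm_eq_norm, frobNorm_eq_norm]
  have : (WithLp.equiv 2 ((Fin d × Fin d) → ℂ)).symm (fun ij => (X + Y) ij.1 ij.2)
      = (WithLp.equiv 2 ((Fin d × Fin d) → ℂ)).symm (fun ij => X ij.1 ij.2)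
        + (WithLp.equiv 2 ((Fin d × Fin d) → ℂ)).symm (fun ij => Y ij.1 ij.2) := rfl
  rw [this]
  exact norm_add_le _ _

lemma outerSum_isHermitian {d r : ℕ} (c : Fin r → ℝ) (u : Fin r → Fin d → ℂ) :
    (OuterSum c u u).IsHermitian := outerSum_conjTranspose c u u

lemma outerSum_rank_le {d r : ℕ} (c : Fin r → ℝ) (u : Fin r → Fin d → ℂ) :
    (OuterSum c u u).rank ≤ r := by
  have : OuterSum c u u
      = (Matrix.of fun i (k : Fin r) => (c k : ℂ) * u k i)
        * (Matrix.of fun (k : Fin r) j => (starRingEnd ℂ) (u k j)) := by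
    ext i j
    rw [Matrix.mul_apply]
    rfl
  rw [this]
  calc ((Matrix.of fun i (k : Fin r) => (c k : ℂ) * u k i)
        * (Matrix.of fun (k : Fin r) j => (starRingEnd ℂ) (u k j))).rank
      ≤ (Matrix.of fun i (k : Fin r) => (c k : ℂ) * u k i).rank := Matrix.rank_mul_le_left _ _
    _ ≤ Fintype.card (Fin r) := Matrix.rank_le_card_width _
    _ = r := Fintype.card_fin r

lemma frobSq_of_gram {d r : ℕ} {c : Fin r → ℝ} {u : Fin r → Fin d → ℂ} (hG : Gram c u) :
    frobSq (OuterSum c u u) = ∑ k, (c k)^2 := by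
  rw [frobSq_outerSum_eq c c u u hG]
  refine Finset.sum_congr rfl fun k _ => ?_
  by_cases hc : c k ≠ 0
  · have h1 : dotc (u k) (u k) = 1 := by rw [hG k k, if_pos ⟨rfl, hc⟩]
    have h2 : nsqv (u k) = 1 := by
      have := dotc_self (u k)
      rw [h1] at this
      exact_mod_cast this.symm
    rw [h2, if_pos hc]; ring
  · push_neg at hc
    rw [if_neg (by simpa using hc), hc]; ring

lemma exists_gram_decomp {d r : ℕ} {B : Matrix (Fin d) (Fin d) ℂ}
    (hB : B.IsHermitian) (hrank : B.rank ≤ r) :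
    ∃ (c : Fin r → ℝ) (u : Fin r → Fin d → ℂ), Gram c u ∧ OuterSum c u u = B := by
  classical
  set eig : Fin d → ℝ := hB.eigenvalues with heig
  set v : Fin d → (Fin d → ℂ) := fun i => ⇑(hB.eigenvectorBasis i) with hv
  have hvorth : ∀ m m', dotc (v m) (v m') = if m = m' then 1 else 0 := by
    intro m m'
    have := orthonormal_iff_ite.1 hB.eigenvectorBasis.orthonormal m m'
    rw [← this, PiLp.inner_apply]
    simp only [dotc]
    exact Finset.sum_congr rfl fun i _ => (RCLike.inner_apply' _ _).symm
  have hcard : Fintype.card {i // eig i ≠ 0} ≤ Fintype.card (Fin r) := by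
    rw [Fintype.card_fin]
    exact le_trans (le_of_eq hB.rank_eq_card_non_zero_eigs.symm) hrank
  obtain ⟨e⟩ := Function.Embedding.nonempty_of_card_le hcard
  set c : Fin r → ℝ := Function.extend e (fun i₀ => eig i₀.1) 0 with hc
  set u : Fin r → Fin d → ℂ := Function.extend e (fun i₀ => v i₀.1) 0 with hu
  have hce : ∀ i₀, c (e i₀) = eig i₀.1 := fun i₀ => e.injective.extend_apply _ _ _
  have hue : ∀ i₀, u (e i₀) = v i₀.1 := fun i₀ => e.injective.extend_apply _ _ _
  have hcn : ∀ k, (¬∃ i₀, e i₀ = k) → c k = 0 := fun k h => by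
    rw [hc, Function.extend_apply' _ _ _ h]; rfl
  have hun : ∀ k, (¬∃ i₀, e i₀ = k) → u k = 0 := fun k h => by
    rw [hu, Function.extend_apply' _ _ _ h]; rfl
  refine ⟨c, u, ?_, ?_⟩
  · -- Gram
    intro j k
    by_cases hj : ∃ i₀, e i₀ = j
    · obtain ⟨i₁, rfl⟩ := hj
      by_cases hk : ∃ i₀, e i₀ = k
      · obtain ⟨i₂, rfl⟩ := hk
        rw [hue, hue, hvorth]
        by_cases h12 : i₁ = i₂
        · subst h12
          rw [if_pos rfl, if_pos ⟨rfl, by rw [hce]; exact i₁.2⟩]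
        · rw [if_neg (fun h => h12 (Subtype.ext h)), if_neg]
          rintro ⟨h, -⟩
          exact h12 (e.injective h)
      · rw [hun k hk]
        have : dotc (u (e i₁)) 0 = 0 := by simp [dotc]
        rw [this, if_neg]
        rintro ⟨rfl, -⟩
        exact hk ⟨i₁, rfl⟩
    · rw [hun j hj]
      have : dotc 0 (u k) = 0 := by simp [dotc]
      rw [this, if_neg]
      rintro ⟨rfl, hne⟩
      exact hne (hcn j hj)
  · -- OuterSum c u u = B
    ext i j
    have hBij : B i j = ∑ m, (eig m : ℂ) * v m i * (starRingEnd ℂ) (v m j) := by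
      conv_lhs => rw [hB.spectral_theorem]
      rw [Unitary.conjStarAlgAut_apply, Matrix.mul_apply]
      refine Finset.sum_congr rfl fun m _ => ?_
      rw [Matrix.mul_diagonal, Matrix.star_apply]
      simp only [Matrix.IsHermitian.eigenvectorUnitary_apply, Function.comp_apply]
      rw [Complex.star_def]
      have hco : ∀ x : ℝ, (RCLike.ofReal x : ℂ) = Complex.ofReal x := fun x => rfl
      simp only [heig, hv, hco]
      ring
    rw [hBij]
    show (∑ k, (c k : ℂ) * u k i * (starRingEnd ℂ) (u k j)) = _
    have step1 : (∑ k, (c k : ℂ) * u k i * (starRingEnd ℂ) (u k j))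
        = ∑ k ∈ Finset.univ.image ⇑e, (c k : ℂ) * u k i * (starRingEnd ℂ) (u k j) := by
      refine (Finset.sum_subset (Finset.subset_univ _) fun k _ hk => ?_).symm
      have hnk : ¬∃ i₀, e i₀ = k := by
        intro ⟨i₀, hi₀⟩
        exact hk (Finset.mem_image.2 ⟨i₀, Finset.mem_univ _, hi₀⟩)
      rw [hcn k hnk]
      simp
    rw [step1, Finset.sum_image (fun a _ b _ h => e.injective h)]
    have step2 : ∑ i₀ : {i // eig i ≠ 0}, (c (e i₀) : ℂ) * u (e i₀) i * (starRingEnd ℂ) (u (e i₀) j)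
        = ∑ i₀ : {i // eig i ≠ 0}, (eig i₀.1 : ℂ) * v i₀.1 i * (starRingEnd ℂ) (v i₀.1 j) := by
      refine Finset.sum_congr rfl fun i₀ _ => ?_
      rw [hce, hue]
    rw [step2]
    rw [← Finset.sum_subtype (Finset.univ.filter (fun m => eig m ≠ 0))
      (fun m => by simp) (fun m => (eig m : ℂ) * v m i * (starRingEnd ℂ) (v m j))]
    refine Finset.sum_filter_of_ne fun m _ hne => ?_
    intro h0
    apply hne
    rw [h0]
    push_cast
    ring

open Metric Module


lemma nsqv_nonneg {d : ℕ} (x : Fin d → ℂ) : 0 ≤ nsqv x :=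
  Finset.sum_nonneg fun i _ => Complex.normSq_nonneg _

lemma gram_nsqv_le {d r : ℕ} {c : Fin r → ℝ} {u : Fin r → Fin d → ℂ} (hG : Gram c u) (k : Fin r) :
    nsqv (u k) ≤ 1 := by
  have h := hG k k
  have h2 := dotc_self (u k)
  rw [h] at h2
  by_cases hc : c k ≠ 0
  · rw [if_pos ⟨rfl, hc⟩] at h2
    have : nsqv (u k) = 1 := by exact_mod_cast h2.symm
    rw [this]
  · rw [if_neg (fun h => hc h.2)] at h2
    have : nsqv (u k) = 0 := by exact_mod_cast h2.symm
    rw [this]; norm_num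

lemma eucl_norm_sq_real {r : ℕ} (x : EuclideanSpace ℝ (Fin r)) : ‖x‖^2 = ∑ k, (x k)^2 := by
  rw [EuclideanSpace.norm_eq, Real.sq_sqrt (by positivity)]
  exact Finset.sum_congr rfl fun k _ => by rw [Real.norm_eq_abs, _root_.sq_abs]

lemma eucl_norm_sq_c {d : ℕ} (x : EuclideanSpace ℂ (Fin d)) :
    ‖x‖^2 = nsqv (fun i => x i) := by
  rw [EuclideanSpace.norm_eq, Real.sq_sqrt (by positivity), nsqv]
  exact Finset.sum_congr rfl fun i _ => by
    rw [Complex.sq_norm]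

lemma fsp_finrank (d r : ℕ) :
    finrank ℝ (EuclideanSpace ℝ (Fin r) × (Fin r → EuclideanSpace ℂ (Fin d)))
      = r * (2 * d + 1) := by
  rw [Module.finrank_prod, finrank_euclideanSpace_fin, Module.finrank_pi_fintype]
  have h1 : finrank ℝ (EuclideanSpace ℂ (Fin d)) = 2 * d := by
    have := Module.finrank_mul_finrank ℝ ℂ (EuclideanSpace ℂ (Fin d))
    rw [Complex.finrank_real_complex, finrank_euclideanSpace_fin] at this
    omega
  simp only [h1, Finset.sum_const, Finset.card_univ, Fintype.card_fin, smul_eq_mul]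
  ring

lemma outer_diff {d r : ℕ} (c c' : Fin r → ℝ) (u u' : Fin r → Fin d → ℂ) :
    OuterSum c u u - OuterSum c' u' u'
      = OuterSum (fun k => c k - c' k) u u
        + OuterSum c' (fun k => u k - u' k) u
        + OuterSum c' u' (fun k => u k - u' k) := by
  ext i j
  show (∑ k, (c k : ℂ) * u k i * (starRingEnd ℂ) (u k j))
      - (∑ k, (c' k : ℂ) * u' k i * (starRingEnd ℂ) (u' k j))
    = (∑ k, ((c k - c' k : ℝ) : ℂ) * u k i * (starRingEnd ℂ) (u k j))
      + (∑ k, (c' k : ℂ) * (u k - u' k) i * (starRingEnd ℂ) (u k j))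
      + (∑ k, (c' k : ℂ) * u' k i * (starRingEnd ℂ) ((u k - u' k) j))
  rw [← Finset.sum_sub_distrib, ← Finset.sum_add_distrib, ← Finset.sum_add_distrib]
  refine Finset.sum_congr rfl fun k _ => ?_
  simp only [Pi.sub_apply, map_sub, Complex.ofReal_sub]
  ring

def PhiF (d r : ℕ)
    (p : EuclideanSpace ℝ (Fin r) × (Fin r → EuclideanSpace ℂ (Fin d))) :
    Matrix (Fin d) (Fin d) ℂ :=
  OuterSum (fun k => p.1 k) (fun k i => p.2 k i) (fun k i => p.2 k i)

/-- covering number of `H_{d,r}^s`: for any `δ > 0`, there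
is a `δ`-net of `H_{d,r}^s` contained in `H_{d,r}^s` with at most
`(12/δ + 1)^{r(2d+1)}` elements. -/
theorem stmt_17 (d r : ℕ) (δ : ℝ) (hδ : 0 < δ) :
    ∃ N : Finset (Matrix (Fin d) (Fin d) ℂ),
      (↑N : Set (Matrix (Fin d) (Fin d) ℂ)) ⊆ Hs d r ∧
      (N.card : ℝ) ≤ (12 / δ + 1) ^ (r * (2 * d + 1)) ∧
      ∀ B ∈ Hs d r, ∃ B' ∈ N, frobNorm (B - B') ≤ δ := by
  classical
  have hε : (0:ℝ) < δ/3 := by linarith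
  set K : Set (EuclideanSpace ℝ (Fin r) × (Fin r → EuclideanSpace ℂ (Fin d))) :=
    {p | Gram (fun k => p.1 k) (fun k i => p.2 k i) ∧ ∑ k, (p.1 k)^2 = 1} with hK
  have hKball : K ⊆ closedBall 0 1 := by
    intro p hp
    rw [mem_closedBall_zero_iff, Prod.norm_def]
    apply max_le
    · have h1 : ‖p.1‖^2 = 1 := by rw [eucl_norm_sq_real]; exact hp.2
      nlinarith [norm_nonneg p.1]
    · rw [pi_norm_le_iff_of_nonneg zero_le_one]
      intro k
      have h1 : ‖p.2 k‖^2 = nsqv (fun i => p.2 k i) := eucl_norm_sq_c _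
      have h2 : nsqv (fun i => p.2 k i) ≤ 1 := gram_nsqv_le hp.1 k
      nlinarith [norm_nonneg (p.2 k)]
  obtain ⟨T, hTK, hTcard, hTnet⟩ := exists_net K hKball hε
  refine ⟨T.image (PhiF d r), ?_, ?_, ?_⟩
  · intro B hB
    simp only [Finset.coe_image, Set.mem_image, Finset.mem_coe] at hB
    obtain ⟨p, hpT, rfl⟩ := hB
    have hpK := hTK hpT
    refine ⟨outerSum_isHermitian _ _, outerSum_rank_le _ _, ?_⟩
    rw [show frobNorm (PhiF d r p) = Real.sqrt (frobSq (PhiF d r p)) from rfl]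
    simp only [PhiF]
    rw [frobSq_of_gram hpK.1, hpK.2, Real.sqrt_one]
  · have h1 : ((T.image (PhiF d r)).card : ℝ)
        ≤ (T.card : ℝ) := by exact_mod_cast Finset.card_image_le
    have h63 : 2/(δ/3) + 1 = 6/δ + 1 := by rw [div_div_eq_mul_div]; norm_num
    calc ((T.image (PhiF d r)).card : ℝ)
        ≤ (T.card : ℝ) := h1
      _ ≤ (2/(δ/3) + 1) ^ (r * (2*d+1)) := by rw [← fsp_finrank d r]; exact hTcard
      _ = (6/δ + 1) ^ (r * (2*d+1)) := by rw [h63]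
      _ ≤ (12/δ + 1) ^ (r * (2*d+1)) := by
          apply pow_le_pow_left₀ (by positivity)
          have : 6/δ ≤ 12/δ := by
            apply div_le_div_of_nonneg_right (by norm_num : (6:ℝ) ≤ 12) hδ.le
          linarith
  · intro B hB
    obtain ⟨hBH, hBrank, hBfrob⟩ := hB
    obtain ⟨c, u, hG, hEq⟩ := exists_gram_decomp hBH hBrank
    have hfs : frobSq B = 1 := by
      have : Real.sqrt (frobSq B) = 1 := hBfrob
      exact Real.sqrt_eq_one.1 this
    have hsum : ∑ k, (c k)^2 = 1 := by
      rw [← frobSq_of_gram hG, hEq, hfs]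
    set p : EuclideanSpace ℝ (Fin r) × (Fin r → EuclideanSpace ℂ (Fin d)) :=
      ((WithLp.equiv 2 (Fin r → ℝ)).symm c,
        fun k => (WithLp.equiv 2 (Fin d → ℂ)).symm (u k)) with hpdef
    have hpK : p ∈ K := ⟨hG, hsum⟩
    obtain ⟨t, htT, htd⟩ := hTnet p hpK
    refine ⟨PhiF d r t, Finset.mem_image_of_mem _ htT, ?_⟩
    set c' : Fin r → ℝ := fun k => t.1 k with hc'
    set u' : Fin r → Fin d → ℂ := fun k i => t.2 k i with hu'
    have hG' : Gram c' u' := (hTK htT).1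
    have hsum' : ∑ k, (c' k)^2 = 1 := (hTK htT).2
    rw [dist_eq_norm] at htd
    have hd1 : ‖p.1 - t.1‖ ≤ δ/3 := le_trans (norm_fst_le (p - t)) htd
    have hd2 : ∀ k, ‖p.2 k - t.2 k‖ ≤ δ/3 := fun k =>
      le_trans (le_trans (norm_le_pi_norm (p.2 - t.2) k) (norm_snd_le (p - t))) htd
    have hc1 : ∑ k, (c k - c' k)^2 ≤ (δ/3)^2 := by
      have h2 : ∑ k, (c k - c' k)^2 = ‖p.1 - t.1‖^2 := by
        rw [eucl_norm_sq_real]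
        rfl
      rw [h2]
      exact pow_le_pow_left₀ (norm_nonneg _) hd1 2
    have hw : ∀ k, nsqv (fun i => u k i - u' k i) ≤ (δ/3)^2 := fun k => by
      have h2 : nsqv (fun i => u k i - u' k i) = ‖p.2 k - t.2 k‖^2 := by
        rw [eucl_norm_sq_c]
        rfl
      rw [h2]
      exact pow_le_pow_left₀ (norm_nonneg _) (hd2 k) 2
    have hPhit : PhiF d r t = OuterSum c' u' u' := rfl
    rw [hPhit]
    have hsplit : B - OuterSum c' u' u'
        = OuterSum (fun k => c k - c' k) u u
          + OuterSum c' (fun k => u k - u' k) u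
          + OuterSum c' u' (fun k => u k - u' k) := by
      rw [← hEq]; exact outer_diff c c' u u'
    have b1 : frobNorm (OuterSum (fun k => c k - c' k) u u) ≤ δ/3 := by
      apply frobNorm_le_of_sq hε.le
      rw [frobSq_outerSum_eq c (fun k => c k - c' k) u u hG]
      calc ∑ k, (if c k ≠ 0 then 1 else 0) * (c k - c' k)^2 * nsqv (u k)
          ≤ ∑ k, (c k - c' k)^2 := by
            apply Finset.sum_le_sum
            intro k _
            by_cases hck : c k ≠ 0
            · rw [if_pos hck, one_mul]
              exact mul_le_of_le_one_right (sq_nonneg _) (gram_nsqv_le hG k)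
            · rw [if_neg hck, zero_mul, zero_mul]
              exact sq_nonneg _
        _ ≤ (δ/3)^2 := hc1
    have b2 : frobNorm (OuterSum c' (fun k => u k - u' k) u) ≤ δ/3 := by
      apply frobNorm_le_of_sq hε.le
      rw [frobSq_outerSum_eq c c' (fun k => u k - u' k) u hG]
      calc ∑ k, (if c k ≠ 0 then 1 else 0) * (c' k)^2 * nsqv (fun i => (u k - u' k) i)
          ≤ ∑ k, (c' k)^2 * (δ/3)^2 := by
            apply Finset.sum_le_sum
            intro k _
            have hnn := nsqv_nonneg (fun i => (u k - u' k) i)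
            have hb : nsqv (fun i => (u k - u' k) i) ≤ (δ/3)^2 := hw k
            by_cases hck : c k ≠ 0
            · rw [if_pos hck, one_mul]
              exact mul_le_mul_of_nonneg_left hb (sq_nonneg _)
            · rw [if_neg hck, zero_mul, zero_mul]
              positivity
        _ = (δ/3)^2 := by rw [← Finset.sum_mul, hsum', one_mul]
    have b3 : frobNorm (OuterSum c' u' (fun k => u k - u' k)) ≤ δ/3 := by
      apply frobNorm_le_of_sq hε.le
      rw [← frobSq_conjTranspose, outerSum_conjTranspose]
      rw [frobSq_outerSum_eq c' c' (fun k => u k - u' k) u' hG']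
      calc ∑ k, (if c' k ≠ 0 then 1 else 0) * (c' k)^2 * nsqv (fun i => (u k - u' k) i)
          ≤ ∑ k, (c' k)^2 * (δ/3)^2 := by
            apply Finset.sum_le_sum
            intro k _
            have hb : nsqv (fun i => (u k - u' k) i) ≤ (δ/3)^2 := hw k
            by_cases hck : c' k ≠ 0
            · rw [if_pos hck, one_mul]
              exact mul_le_mul_of_nonneg_left hb (sq_nonneg _)
            · rw [if_neg hck, zero_mul, zero_mul]
              positivity
        _ = (δ/3)^2 := by rw [← Finset.sum_mul, hsum', one_mul]
    rw [hsplit]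
    calc frobNorm (OuterSum (fun k => c k - c' k) u u
            + OuterSum c' (fun k => u k - u' k) u
            + OuterSum c' u' (fun k => u k - u' k))
        ≤ frobNorm (OuterSum (fun k => c k - c' k) u u
            + OuterSum c' (fun k => u k - u' k) u)
          + frobNorm (OuterSum c' u' (fun k => u k - u' k)) := frobNorm_add_le _ _
      _ ≤ frobNorm (OuterSum (fun k => c k - c' k) u u)
          + frobNorm (OuterSum c' (fun k => u k - u' k) u)
          + frobNorm (OuterSum c' u' (fun k => u k - u' k)) := by
            have := frobNorm_add_le (OuterSum (fun k => c k - c' k) u u)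
              (OuterSum c' (fun k => u k - u' k) u)
            linarith
      _ ≤ δ/3 + δ/3 + δ/3 := by linarith
      _ = δ := by ring
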